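/- arXiv:q-alg/9703012 — 2 statements merged into one kernel-verified Lean document; each statement's English description precedes it below -/
import Mathlib

section
/- For all m, n ∈ ℤ, the commutator e_m e_n − e_n e_m lies in ℏ·U; consequently the quotient ℂ-algebra U/ℏU is commutative. -/
/-! Modulo `ℏ` the defining relation reads `[e_{m+1}, e_n] = [e_m, e_{n+1}]`, so `[e_m, e_n]` depends
only on `m + n`. It is then symmetric as well as antisymmetric in `(m, n)`, hence killed by `2`, which
is invertible in `ℂ[[ℏ]]`. So the generators of `U/ℏU` commute pairwise, and `U/ℏU` is commutative. -/

open scoped TensorProduct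

noncomputable section

/-- The base ring `R = ℂ[[ℏ]]`. -/
abbrev R : Type := PowerSeries ℂ

/-- The formal variable `ℏ ∈ ℂ[[ℏ]]`. -/
def hbar : R := PowerSeries.X

/-- The generators `e_n` of the free algebra. -/
def E (n : ℤ) : FreeAlgebra R ℤ := FreeAlgebra.ι R n

/-- The defining relations of `U_ℏ𝔫₊`:
`e_{m+1}e_n − e_n e_{m+1} − e_m e_{n+1} + e_{n+1}e_m = ℏ(e_m e_n + e_n e_m)`. -/
inductive ERel : FreeAlgebra R ℤ → FreeAlgebra R ℤ → Prop
  | current (m n : ℤ) :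
      ERel (E (m + 1) * E n - E n * E (m + 1) - E m * E (n + 1) + E (n + 1) * E m)
        (hbar • (E m * E n + E n * E m))

/-- `U = U_ℏ𝔫₊`, the quotient of the free `R`-algebra on the `e_n`, `n ∈ ℤ`,
by the two-sided ideal generated by the defining relations. -/
abbrev U : Type := RingQuot ERel

/-- The image of `e_n` in `U`. -/
def e (n : ℤ) : U := RingQuot.mkAlgHom R ERel (E n)

/-- `U^{≥0}`, the `R`-subalgebra of `U` generated by the `e_n` with `n ≥ 0`. -/
def Uge : Subalgebra R U := Algebra.adjoin R (Set.range fun n : ℕ => e (n : ℤ))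

/-- `U^{<0}`, the `R`-subalgebra of `U` generated by the `e_n` with `n < 0`. -/
def Ult : Subalgebra R U := Algebra.adjoin R {x : U | ∃ n : ℤ, n < 0 ∧ x = e n}

theorem apply_eq_apply_add_zero {α : Type*} (d : ℤ → ℤ → α)
    (hd : ∀ m n, d (m + 1) n = d m (n + 1)) (m n : ℤ) : d m n = d (m + n) 0 := by
  induction n using Int.induction_on generalizing m with
  | zero => rw [add_zero]
  | succ n ih => rw [← hd, ih, add_right_comm, add_assoc]
  | pred n ih =>
    rw [← sub_add_cancel m 1, hd]
    simp only [sub_add_cancel, ih]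
    ring_nf

theorem commute_of_mul_sub_mul_shift {A : Type*} [Ring A] (h2 : IsUnit (2 : A)) (f : ℤ → A)
    (hf : ∀ m n, f (m + 1) * f n - f n * f (m + 1) = f m * f (n + 1) - f (n + 1) * f m)
    (m n : ℤ) : Commute (f m) (f n) := by
  have hsymm : f m * f n - f n * f m = f n * f m - f m * f n := by
    rw [apply_eq_apply_add_zero (fun m n ↦ f m * f n - f n * f m) hf m n,
      apply_eq_apply_add_zero (fun m n ↦ f m * f n - f n * f m) hf n m, add_comm]
  have htwo : 2 * (f m * f n - f n * f m) = 0 := by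
    rw [two_mul]
    nth_rw 1 [hsymm]
    abel
  exact sub_eq_zero.mp (h2.mul_right_eq_zero.mp htwo)

theorem commute_of_adjoin_eq_top {S A : Type*} [CommSemiring S] [Semiring A] [Algebra S A]
    {s : Set A} (hs : Algebra.adjoin S s = ⊤) (h : ∀ a ∈ s, ∀ b ∈ s, Commute a b) (x y : A) :
    Commute x y := by
  have hgen (a : A) (ha : a ∈ s) (z : A) : Commute a z :=
    Algebra.commute_of_mem_adjoin_of_forall_mem_commute (hs ▸ Algebra.mem_top) (h a ha)
  exact Algebra.commute_of_mem_adjoin_of_forall_mem_commute (hs ▸ Algebra.mem_top)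
    fun b hb ↦ (hgen b hb x).symm

theorem FreeAlgebra.adjoin_range_comp_ι_eq_top {S X A : Type*} [CommSemiring S] [Semiring A]
    [Algebra S A] {f : FreeAlgebra S X →ₐ[S] A} (hf : Function.Surjective f) :
    Algebra.adjoin S (Set.range (f ∘ FreeAlgebra.ι S)) = ⊤ := by
  rw [Algebra.adjoin_range_eq_range_freeAlgebra_lift, FreeAlgebra.lift_comp_ι,
    AlgHom.range_eq_top]
  exact hf

namespace TwoSidedIdeal

variable {S A : Type*} [CommSemiring S] [Ring A] [Algebra S A]

def smulTop (r : S) : TwoSidedIdeal A :=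
  .mk' {x | ∃ u, x = r • u} ⟨0, (smul_zero r).symm⟩
    (fun ⟨u, hu⟩ ⟨v, hv⟩ ↦ ⟨u + v, by rw [hu, hv, smul_add]⟩)
    (fun ⟨u, hu⟩ ↦ ⟨-u, by rw [hu, smul_neg]⟩)
    (fun {x} _ ⟨u, hu⟩ ↦ ⟨x * u, by rw [hu, mul_smul_comm]⟩)
    (fun {_ y} ⟨u, hu⟩ ↦ ⟨u * y, by rw [hu, smul_mul_assoc]⟩)

theorem mem_smulTop {r : S} {x : A} : x ∈ smulTop r ↔ ∃ u, x = r • u :=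
  mem_mk' ..

theorem mkₐ_eq_zero_iff {I : TwoSidedIdeal A} {x : A} : I.ringCon.mkₐ S x = 0 ↔ x ∈ I :=
  I.ringCon.eq

end TwoSidedIdeal

theorem isUnit_two_powerSeries : IsUnit (2 : R) :=
  PowerSeries.isUnit_iff_constantCoeff.mpr (by rw [map_ofNat]; exact two_ne_zero.isUnit)

abbrev hbarIdeal : TwoSidedIdeal U := TwoSidedIdeal.smulTop (A := U) hbar

abbrev UModHbar : Type := hbarIdeal.ringCon.Quotient

def modHbar : U →ₐ[R] UModHbar := hbarIdeal.ringCon.mkₐ R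

theorem modHbar_eq_zero_iff {x : U} : modHbar x = 0 ↔ ∃ u, x = hbar • u :=
  TwoSidedIdeal.mkₐ_eq_zero_iff.trans TwoSidedIdeal.mem_smulTop

def eModHbar (n : ℤ) : UModHbar := modHbar (e n)

theorem adjoin_range_eModHbar : Algebra.adjoin R (Set.range eModHbar) = ⊤ :=
  FreeAlgebra.adjoin_range_comp_ι_eq_top (f := modHbar.comp (RingQuot.mkAlgHom R ERel))
    ((RingCon.mkₐ_surjective (α := R) _).comp (RingQuot.mkAlgHom_surjective R ERel))

theorem eModHbar_current (m n : ℤ) :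
    eModHbar (m + 1) * eModHbar n - eModHbar n * eModHbar (m + 1) =
      eModHbar m * eModHbar (n + 1) - eModHbar (n + 1) * eModHbar m := by
  have hrel := congrArg modHbar (RingQuot.mkAlgHom_rel R (ERel.current m n))
  rw [modHbar_eq_zero_iff.mpr ⟨_, map_smul _ _ _⟩] at hrel
  simp only [map_add, map_sub, map_mul] at hrel
  rw [← sub_eq_zero, ← hrel]
  unfold eModHbar e
  abel

theorem commute_modHbar (x y : UModHbar) : Commute x y := by
  refine commute_of_adjoin_eq_top adjoin_range_eModHbar ?_ x y
  rintro _ ⟨m, rfl⟩ _ ⟨n, rfl⟩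
  have h2 : IsUnit (2 : UModHbar) := by
    rw [← map_ofNat (algebraMap R UModHbar) 2]
    exact isUnit_two_powerSeries.map _
  exact commute_of_mul_sub_mul_shift h2 eModHbar eModHbar_current m n

/-- for all `m, n ∈ ℤ` the commutator `e_m e_n − e_n e_m` lies in `ℏ·U`;
consequently the quotient `U/ℏU` is commutative, i.e. every commutator in `U`
lies in `ℏ·U`. -/
theorem commutator_mem_hbar_smul :
    (∀ m n : ℤ, ∃ u : U, e m * e n - e n * e m = hbar • u) ∧
      (∀ x y : U, ∃ u : U, x * y - y * x = hbar • u) := by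
  have hcomm (x y : U) : ∃ u : U, x * y - y * x = hbar • u := by
    refine modHbar_eq_zero_iff.mp ?_
    rw [map_sub modHbar, map_mul modHbar, map_mul modHbar, (commute_modHbar _ _).eq, sub_self]
  exact ⟨fun m n ↦ hcomm (e m) (e n), hcomm⟩

end
end

section
/- The ℂ-algebra homomorphism from the polynomial ring ℂ[x_n : n ∈ ℤ] (in commuting indeterminates x_n indexed by ℤ) to U/ℏU sending x_n to the class of e_n is an isomorphism of ℂ-algebras; that is, U is a flat deformation of the commutative polynomial algebra ℂ[x_n, n ∈ ℤ]. -/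
open scoped TensorProduct

noncomputable section

/-- The relation killing `ℏ`: the quotient `RingQuot HRel = U/ℏU`. -/
inductive HRel : U → U → Prop
  | hbar_zero : HRel (algebraMap R U hbar) 0

/-- The quotient `ℂ`-algebra `U/ℏU`. -/
abbrev Q : Type := RingQuot HRel

/-- The class of `e_n` in `U/ℏU`. -/
def ebar (n : ℤ) : Q := RingQuot.mkAlgHom ℂ HRel (e n)

/-!
Modulo `ℏ` the defining relation says that the commutator `[e_m, e_n]` depends only on `m + n`.
Being antisymmetric, it then equals its own negative, so it vanishes and `U/ℏU` is commutative.
Since `ℏ`-adic scalars act on `U/ℏU` through their constant term, `U/ℏU` is generated over `ℂ` by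
the `e_n`, which gives surjectivity. Injectivity comes from the classical limit `e_n ↦ x_n`,
`ℏ ↦ 0`, which respects the relation since both of its sides vanish in a commutative ring with
`ℏ = 0`.
-/

theorem commute_of_commutator_shift {k B : Type*} [Field k] [CharZero k] [Ring B] [Module k B]
    (f : ℤ → B)
    (h : ∀ m n, f (m + 1) * f n - f n * f (m + 1) = f m * f (n + 1) - f (n + 1) * f m)
    (m n : ℤ) : Commute (f m) (f n) := by
  set c : ℤ → ℤ → B := fun m n => f m * f n - f n * f m with hc
  have hsum : ∀ m n, c m n = c 0 (m + n) := by
    intro m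
    induction m using Int.induction_on with
    | zero => simp
    | succ i ih => intro n; rw [show c (i + 1) n = c i (n + 1) from h i n, ih]; ring_nf
    | pred i ih =>
      intro n
      rw [show c (-i - 1) n = c (-i) (n - 1) by simpa using (h (-i - 1) (n - 1)).symm, ih]
      ring_nf
  have hsymm : c n m = c m n := by rw [hsum, hsum m, add_comm]
  have htwo : (2 : k) • c m n = 0 := by
    rw [two_smul]
    nth_rewrite 1 [← hsymm]
    simp only [hc]
    abel
  exact sub_eq_zero.mp ((smul_eq_zero.mp htwo).resolve_left two_ne_zero)

theorem PowerSeries.algebraMap_apply_of_algebraMap_X_eq_zero {k B : Type*} [CommRing k] [Semiring B]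
    [Algebra k B] [Algebra (PowerSeries k) B] [IsScalarTower k (PowerSeries k) B]
    (hX : algebraMap (PowerSeries k) B X = 0) (r : PowerSeries k) :
    algebraMap (PowerSeries k) B r = algebraMap k B (constantCoeff r) := by
  conv_lhs => rw [eq_X_mul_shift_add_const r]
  rw [map_add, map_mul, hX, zero_mul, zero_add, IsScalarTower.algebraMap_apply k (PowerSeries k) B]
  rfl

theorem RingQuot.mkAlgHom_apply (S : Type*) {A : Type*} [CommSemiring S] [Semiring A]
    [Algebra S A] (s : A → A → Prop) (a : A) : mkAlgHom S s a = mkRingHom s a :=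
  DFunLike.congr_fun (mkAlgHom_coe S s) a

-- Instance search does not see through the two nested `RingQuot`s on its own.
instance : Ring Q := RingQuot.instRing HRel

def freeToQ : FreeAlgebra R ℤ →ₐ[R] Q :=
  (RingQuot.mkAlgHom R HRel).comp (RingQuot.mkAlgHom R ERel)

theorem freeToQ_surjective : Function.Surjective freeToQ :=
  (RingQuot.mkAlgHom_surjective R HRel).comp (RingQuot.mkAlgHom_surjective R ERel)

theorem freeToQ_apply (x : FreeAlgebra R ℤ) :
    freeToQ x = RingQuot.mkRingHom HRel (RingQuot.mkRingHom ERel x) := by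
  rw [freeToQ, AlgHom.comp_apply, RingQuot.mkAlgHom_apply, RingQuot.mkAlgHom_apply]

theorem freeToQ_ι (n : ℤ) : freeToQ (FreeAlgebra.ι R n) = ebar n := by
  rw [freeToQ_apply, ebar, e, RingQuot.mkAlgHom_apply, RingQuot.mkAlgHom_apply]; rfl

theorem adjoin_range_ebar : Algebra.adjoin R (Set.range ebar) = ⊤ := by
  rw [show Set.range ebar = freeToQ '' Set.range (FreeAlgebra.ι R) by
      rw [← Set.range_comp]; exact congrArg Set.range (funext freeToQ_ι).symm,
    ← AlgHom.map_adjoin, FreeAlgebra.adjoin_range_ι, Algebra.map_top]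
  exact (AlgHom.range_eq_top _).mpr freeToQ_surjective

theorem mem_adjoin_range_ebar (x : Q) : x ∈ Algebra.adjoin R (Set.range ebar) :=
  adjoin_range_ebar ▸ Algebra.mem_top

theorem algebraMap_hbar_eq_zero : algebraMap R Q hbar = 0 := by
  rw [← (RingQuot.mkAlgHom R HRel).commutes]
  exact RingQuot.mkAlgHom_rel R HRel.hbar_zero |>.trans (map_zero _)

theorem ebar_commutator_shift (m n : ℤ) :
    ebar (m + 1) * ebar n - ebar n * ebar (m + 1) =
      ebar m * ebar (n + 1) - ebar (n + 1) * ebar m := by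
  have h := congrArg (RingQuot.mkAlgHom R HRel) (RingQuot.mkAlgHom_rel R (ERel.current m n))
  rw [← AlgHom.comp_apply, ← AlgHom.comp_apply, ← freeToQ, map_smul, Algebra.smul_def,
    algebraMap_hbar_eq_zero, zero_mul] at h
  simp only [map_add, map_sub, map_mul, E, freeToQ_ι] at h
  rw [← sub_eq_zero, ← h]
  abel

theorem ebar_commute (m n : ℤ) : Commute (ebar m) (ebar n) :=
  commute_of_commutator_shift (k := ℂ) ebar ebar_commutator_shift m n

theorem Q_mul_comm (x y : Q) : x * y = y * x := by
  refine Algebra.commute_of_mem_adjoin_of_forall_mem_commute (mem_adjoin_range_ebar y) ?_ |>.eq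
  rintro _ ⟨n, rfl⟩
  exact Algebra.commute_of_mem_adjoin_of_forall_mem_commute (mem_adjoin_range_ebar x)
    (by rintro _ ⟨m, rfl⟩; exact ebar_commute n m) |>.symm

instance : CommRing Q := { (inferInstance : Ring Q) with mul_comm := Q_mul_comm }

theorem algebraMap_Q_eq_constantCoeff (r : R) :
    algebraMap R Q r = algebraMap ℂ Q (PowerSeries.constantCoeff r) :=
  PowerSeries.algebraMap_apply_of_algebraMap_X_eq_zero algebraMap_hbar_eq_zero r

theorem adjoin_complex_range_ebar : Algebra.adjoin ℂ (Set.range ebar) = ⊤ := by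
  refine Algebra.eq_top_iff.mpr fun x => ?_
  induction mem_adjoin_range_ebar x using Algebra.adjoin_induction with
  | mem x hx => exact Algebra.subset_adjoin hx
  | algebraMap r => rw [algebraMap_Q_eq_constantCoeff]; exact Subalgebra.algebraMap_mem _ _
  | add x y _ _ hx hy => exact add_mem hx hy
  | mul x y _ _ hx hy => exact mul_mem hx hy

def classicalLimitFree : FreeAlgebra R ℤ →+* MvPolynomial ℤ ℂ :=
  (MvPolynomial.map PowerSeries.constantCoeff).comp
    (FreeAlgebra.lift R (MvPolynomial.X : ℤ → MvPolynomial ℤ R)).toRingHom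

theorem classicalLimitFree_ι (n : ℤ) :
    classicalLimitFree (FreeAlgebra.ι R n) = MvPolynomial.X n := by
  simp [classicalLimitFree]

theorem classicalLimitFree_algebraMap (r : R) :
    classicalLimitFree (algebraMap R _ r) = MvPolynomial.C (PowerSeries.constantCoeff r) := by
  simp [classicalLimitFree]

theorem classicalLimitFree_respects_ERel ⦃x y : FreeAlgebra R ℤ⦄ (h : ERel x y) :
    classicalLimitFree x = classicalLimitFree y := by
  obtain ⟨m, n⟩ := h
  simp only [map_add, map_sub, map_mul, Algebra.smul_def, classicalLimitFree_algebraMap, E,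
    classicalLimitFree_ι, hbar, PowerSeries.constantCoeff_X, map_zero, zero_mul]
  ring

def classicalLimitU : U →+* MvPolynomial ℤ ℂ :=
  RingQuot.lift ⟨classicalLimitFree, classicalLimitFree_respects_ERel⟩

theorem classicalLimitU_respects_HRel ⦃x y : U⦄ (h : HRel x y) :
    classicalLimitU x = classicalLimitU y := by
  obtain ⟨⟩ := h
  rw [← (RingQuot.mkAlgHom R ERel).commutes, RingQuot.mkAlgHom_apply, classicalLimitU,
    RingQuot.lift_mkRingHom_apply, classicalLimitFree_algebraMap, map_zero, hbar,
    PowerSeries.constantCoeff_X, map_zero]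

def classicalLimit : Q →+* MvPolynomial ℤ ℂ :=
  RingQuot.lift ⟨classicalLimitU, classicalLimitU_respects_HRel⟩

theorem classicalLimit_freeToQ (x : FreeAlgebra R ℤ) :
    classicalLimit (freeToQ x) = classicalLimitFree x := by
  rw [freeToQ_apply, classicalLimit, RingQuot.lift_mkRingHom_apply, classicalLimitU,
    RingQuot.lift_mkRingHom_apply]

theorem classicalLimit_ebar (n : ℤ) : classicalLimit (ebar n) = MvPolynomial.X n := by
  rw [← freeToQ_ι, classicalLimit_freeToQ, classicalLimitFree_ι]

theorem classicalLimit_algebraMap (c : ℂ) :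
    classicalLimit (algebraMap ℂ Q c) = MvPolynomial.C c := by
  rw [IsScalarTower.algebraMap_apply ℂ R Q, ← freeToQ.commutes, classicalLimit_freeToQ,
    classicalLimitFree_algebraMap]
  simp

theorem classicalLimit_aeval_ebar (p : MvPolynomial ℤ ℂ) :
    classicalLimit (MvPolynomial.aeval ebar p) = p := by
  have h : classicalLimit.comp (MvPolynomial.aeval ebar).toRingHom = RingHom.id _ :=
    MvPolynomial.ringHom_ext (fun c => by simp [classicalLimit_algebraMap])
      (fun n => by simp [classicalLimit_ebar])
  exact RingHom.congr_fun h p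

/-- the `ℂ`-algebra homomorphism `ℂ[x_n : n ∈ ℤ] → U/ℏU` sending `x_n` to
the class of `e_n` is an isomorphism of `ℂ`-algebras: `U` is a flat deformation of the
commutative polynomial algebra `ℂ[x_n, n ∈ ℤ]`. -/
theorem mvPolynomial_to_quotient_bijective :
    ∃ φ : MvPolynomial ℤ ℂ →ₐ[ℂ] Q,
      (∀ n : ℤ, φ (MvPolynomial.X n) = ebar n) ∧ Function.Bijective φ := by
  refine ⟨MvPolynomial.aeval ebar, MvPolynomial.aeval_X ebar,
    Function.LeftInverse.injective classicalLimit_aeval_ebar, ?_⟩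
  rw [← AlgHom.range_eq_top, ← Algebra.adjoin_range_eq_range_aeval, adjoin_complex_range_ebar]
end
end
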